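/- arXiv:1509.08519 — 4 statements merged into one kernel-verified Lean document; each statement's English description precedes it below -/
import Mathlib

section
/- (Corollary 1) For every fixed real number a, the function μ_a(t) := λ_t − 2λ_{t+a/2} + λ_{t+a} is log-convex in t; in particular, for all real t and u, μ_a(t)·μ_a(u) ≥ (μ_a((t+u)/2))². -/
open MeasureTheory

/-- The moment difference `λ_s(X)` of a positive random variable `X`. -/
noncomputable def momentLambda {Ω : Type*} [MeasurableSpace Ω] (μ : Measure Ω) (X : Ω → ℝ)
    (s : ℝ) : ℝ :=
  if s = 0 then Real.log (∫ ω, X ω ∂μ) - ∫ ω, Real.log (X ω) ∂μ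
  else if s = 1 then (∫ ω, X ω * Real.log (X ω) ∂μ) - (∫ ω, X ω ∂μ) * Real.log (∫ ω, X ω ∂μ)
  else ((∫ ω, X ω ^ s ∂μ) - (∫ ω, X ω ∂μ) ^ s) / (s * (s - 1))

/-- `μ_a(t) := λ_t - 2λ_{t+a/2} + λ_{t+a}`. -/
noncomputable def momentMu {Ω : Type*} [MeasurableSpace Ω] (μ : Measure Ω) (X : Ω → ℝ)
    (a t : ℝ) : ℝ :=
  momentLambda μ X t - 2 * momentLambda μ X (t + a / 2) + momentLambda μ X (t + a)

/-!
`λ_s` is the Jensen gap `E[φ_s(X)] - φ_s(E[X])` of the convex function `φ_s` with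
`φ_s''(y) = y ^ (s - 2)`. Subtracting the tangent line at `m = E[X]` and using Taylor's formula
with integral remainder, `λ_s = E[∫_{Ι m X} |X - y| y ^ (s - 2) dy]`. Consequently
`μ_a(t) = E[∫_{Ι m X} |X - y| (1 - y ^ (a / 2)) ^ 2 y ^ (t - 2) dy]` is the integral of `y ^ t`
against a positive weight, and Cauchy–Schwarz, applied first in `y` and then in `ω`, gives
`μ_a((t + u) / 2) ^ 2 ≤ μ_a(t) μ_a(u)`.
-/

open Set
open scoped Interval

theorem integral_pos_of_ae_pos {α : Type*} [MeasurableSpace α] {μ : Measure α} [NeZero μ]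
    {f : α → ℝ} (hf : Integrable f μ) (hpos : ∀ᵐ a ∂μ, 0 < f a) : 0 < ∫ a, f a ∂μ := by
  have hnn : 0 ≤ᵐ[μ] f := hpos.mono fun _ h => h.le
  refine (integral_nonneg_of_ae hnn).lt_of_ne fun h0 => ?_
  obtain ⟨a, hfa, hfa0⟩ := (hpos.and ((integral_eq_zero_iff_of_nonneg_ae hnn hf).1 h0.symm)).exists
  exact hfa.ne' hfa0

theorem sq_integral_le_integral_mul_integral {α : Type*} [MeasurableSpace α] {μ : Measure α}
    {f g h : α → ℝ} (hf : Integrable f μ) (hg : Integrable g μ)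
    (hf₀ : 0 ≤ᵐ[μ] f) (hg₀ : 0 ≤ᵐ[μ] g) (hfgh : ∀ᵐ a ∂μ, h a ^ 2 ≤ f a * g a) :
    (∫ a, h a ∂μ) ^ 2 ≤ (∫ a, f a ∂μ) * ∫ a, g a ∂μ := by
  have memLp_sqrt : ∀ {k : α → ℝ}, Integrable k μ → 0 ≤ᵐ[μ] k → MemLp (fun a => √(k a)) 2 μ :=
    fun hk hk₀ => (memLp_two_iff_integrable_sq
      (Real.continuous_sqrt.comp_aestronglyMeasurable hk.1)).2
      (hk.congr (hk₀.mono fun a ha => (Real.sq_sqrt ha).symm))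
  have integral_sqrt_rpow : ∀ {k : α → ℝ}, 0 ≤ᵐ[μ] k →
      ∫ a, √(k a) ^ (2 : ℝ) ∂μ = ∫ a, k a ∂μ := fun hk₀ =>
    integral_congr_ae (hk₀.mono fun a ha => by simp only [Real.rpow_two, Real.sq_sqrt ha])
  have hCS := integral_mul_le_Lp_mul_Lq_of_nonneg Real.HolderConjugate.two_two
    (ae_of_all _ fun a => Real.sqrt_nonneg (f a)) (ae_of_all _ fun a => Real.sqrt_nonneg (g a))
    (by simpa using memLp_sqrt hf hf₀) (by simpa using memLp_sqrt hg hg₀)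
  rw [integral_sqrt_rpow hf₀, integral_sqrt_rpow hg₀, ← Real.sqrt_eq_rpow,
    ← Real.sqrt_eq_rpow] at hCS
  have habs : |∫ a, h a ∂μ| ≤ ∫ a, √(f a) * √(g a) ∂μ := by
    refine abs_integral_le_integral_abs.trans (integral_mono_of_nonneg
      (ae_of_all _ fun a => abs_nonneg _) ((memLp_sqrt hf hf₀).integrable_mul (memLp_sqrt hg hg₀))
      ?_)
    filter_upwards [hfgh, hf₀] with a ha hfa
    rw [← Real.sqrt_mul hfa, ← Real.sqrt_sq_eq_abs]
    exact Real.sqrt_le_sqrt ha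
  calc (∫ a, h a ∂μ) ^ 2 = |∫ a, h a ∂μ| ^ 2 := (sq_abs _).symm
    _ ≤ (√(∫ a, f a ∂μ) * √(∫ a, g a ∂μ)) ^ 2 := by gcongr; exact habs.trans hCS
    _ = (∫ a, f a ∂μ) * ∫ a, g a ∂μ := by
      rw [mul_pow, Real.sq_sqrt (integral_nonneg_of_ae hf₀),
        Real.sq_sqrt (integral_nonneg_of_ae hg₀)]

theorem integral_sub_mul_eq_taylor_remainder {φ φ' φ'' : ℝ → ℝ} {m x : ℝ}
    (hφ : ∀ y ∈ uIcc m x, HasDerivAt φ (φ' y) y) (hφ' : ∀ y ∈ uIcc m x, HasDerivAt φ' (φ'' y) y)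
    (hint : IntervalIntegrable (fun y => (x - y) * φ'' y) volume m x) :
    ∫ y in m..x, (x - y) * φ'' y = φ x - φ m - φ' m * (x - m) := by
  have hderiv : ∀ y ∈ uIcc m x,
      HasDerivAt (fun y => (x - y) * φ' y + φ y) ((x - y) * φ'' y) y := fun y hy =>
    ((((hasDerivAt_id y).const_sub x).mul (hφ' y hy)).add (hφ y hy)).congr_deriv
      (by simp only [id]; ring)
  rw [intervalIntegral.integral_eq_sub_of_hasDerivAt hderiv hint]
  ring

theorem integral_sub_mul_eq_integral_uIoc_abs_sub_mul (f : ℝ → ℝ) (m x : ℝ) :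
    ∫ y in m..x, (x - y) * f y = ∫ y in Ι m x, |x - y| * f y := by
  rcases le_total m x with hmx | hxm
  · rw [intervalIntegral.integral_of_le hmx, uIoc_of_le hmx]
    exact setIntegral_congr_fun measurableSet_Ioc fun y hy => by
      rw [abs_of_nonneg (sub_nonneg.2 hy.2)]
  · rw [intervalIntegral.integral_of_ge hxm, uIoc_of_ge hxm, ← integral_neg]
    exact setIntegral_congr_fun measurableSet_Ioc fun y hy => by
      rw [abs_of_neg (sub_neg.2 hy.1)]; ring

-- `φ_s`, normalized so that `φ_s'' y = y ^ (s - 2)`; then `λ_s = E[φ_s(X)] - φ_s(E[X])`.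
noncomputable def powPotential (s y : ℝ) : ℝ :=
  if s = 0 then -Real.log y else if s = 1 then y * Real.log y else y ^ s / (s * (s - 1))

noncomputable def powPotentialDeriv (s y : ℝ) : ℝ :=
  if s = 1 then Real.log y + 1 else y ^ (s - 1) / (s - 1)

theorem hasDerivAt_powPotential (s : ℝ) {y : ℝ} (hy : 0 < y) :
    HasDerivAt (powPotential s) (powPotentialDeriv s y) y := by
  unfold powPotential powPotentialDeriv
  rcases eq_or_ne s 0 with rfl | hs₀
  · simp only [zero_ne_one, ↓reduceIte]
    exact (Real.hasDerivAt_log hy.ne').neg.congr_deriv (by rw [zero_sub, Real.rpow_neg_one]; ring)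
  rcases eq_or_ne s 1 with rfl | hs₁
  · simpa using Real.hasDerivAt_mul_log hy.ne'
  simp only [if_neg hs₀, if_neg hs₁]
  refine ((Real.hasDerivAt_rpow_const (p := s) (Or.inl hy.ne')).div_const
    (s * (s - 1))).congr_deriv ?_
  field_simp

theorem hasDerivAt_powPotentialDeriv (s : ℝ) {y : ℝ} (hy : 0 < y) :
    HasDerivAt (powPotentialDeriv s) (y ^ (s - 2)) y := by
  unfold powPotentialDeriv
  rcases eq_or_ne s 1 with rfl | hs₁
  · simpa [show (1 : ℝ) - 2 = -1 by norm_num, Real.rpow_neg_one] using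
      (Real.hasDerivAt_log hy.ne').add_const 1
  simp only [if_neg hs₁]
  refine ((Real.hasDerivAt_rpow_const (p := s - 1) (Or.inl hy.ne')).div_const
    (s - 1)).congr_deriv ?_
  rw [sub_sub, one_add_one_eq_two]
  field_simp [sub_ne_zero.2 hs₁]

theorem pos_of_mem_uIcc {m x y : ℝ} (hm : 0 < m) (hx : 0 < x) (hy : y ∈ uIcc m x) : 0 < y :=
  lt_of_lt_of_le (lt_min hm hx) hy.1

theorem continuousOn_rpow_uIcc {m x : ℝ} (hm : 0 < m) (hx : 0 < x) (r : ℝ) :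
    ContinuousOn (fun y : ℝ => y ^ r) (uIcc m x) :=
  continuousOn_id.rpow_const fun _ hy => Or.inl (pos_of_mem_uIcc hm hx hy).ne'

noncomputable def powBregman (s m x : ℝ) : ℝ :=
  powPotential s x - powPotential s m - powPotentialDeriv s m * (x - m)

theorem powBregman_eq_integral {m x : ℝ} (hm : 0 < m) (hx : 0 < x) (s : ℝ) :
    powBregman s m x = ∫ y in Ι m x, |x - y| * y ^ (s - 2) := by
  rw [← integral_sub_mul_eq_integral_uIoc_abs_sub_mul, powBregman,
    integral_sub_mul_eq_taylor_remainder
      (fun y hy => hasDerivAt_powPotential s (pos_of_mem_uIcc hm hx hy))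
      (fun y hy => hasDerivAt_powPotentialDeriv s (pos_of_mem_uIcc hm hx hy))]
  exact (((continuous_const.sub continuous_id).continuousOn).mul
    (continuousOn_rpow_uIcc hm hx _)).intervalIntegrable

noncomputable def momentMuIntegrand (m a t x : ℝ) : ℝ :=
  ∫ y in Ι m x, |x - y| * (1 - y ^ (a / 2)) ^ 2 * y ^ (t - 2)

section MomentMuIntegrand

variable {m x : ℝ}

theorem integrableOn_uIoc_abs_sub_mul_rpow (hm : 0 < m) (hx : 0 < x) (c : ℝ → ℝ)
    (hc : ContinuousOn c (uIcc m x)) (r : ℝ) :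
    IntegrableOn (fun y => |x - y| * c y * y ^ r) (Ι m x) :=
  (((continuous_const.sub continuous_id).abs.continuousOn.mul hc).mul
    (continuousOn_rpow_uIcc hm hx r)).integrableOn_uIcc.mono_set uIoc_subset_uIcc

theorem momentMuIntegrand_eq (hm : 0 < m) (hx : 0 < x) (a t : ℝ) :
    momentMuIntegrand m a t x =
      powBregman t m x - 2 * powBregman (t + a / 2) m x + powBregman (t + a) m x := by
  have hint : ∀ r : ℝ, IntegrableOn (fun y => |x - y| * y ^ r) (Ι m x) := fun r => by
    simpa using integrableOn_uIoc_abs_sub_mul_rpow hm hx (fun _ => 1) continuousOn_const r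
  have hint_sub : IntegrableOn
      (fun y => |x - y| * y ^ (t - 2) - 2 * (|x - y| * y ^ (t + a / 2 - 2))) (Ι m x) :=
    (hint _).sub ((hint _).const_mul 2)
  calc momentMuIntegrand m a t x
      = ∫ y in Ι m x, (|x - y| * y ^ (t - 2) - 2 * (|x - y| * y ^ (t + a / 2 - 2)) +
          |x - y| * y ^ (t + a - 2)) := by
        refine setIntegral_congr_fun measurableSet_uIoc fun y hy => ?_
        have hy₀ : 0 < y := pos_of_mem_uIcc hm hx (uIoc_subset_uIcc hy)
        have h₁ : y ^ (t + a / 2 - 2) = y ^ (t - 2) * y ^ (a / 2) := by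
          rw [← Real.rpow_add hy₀]; ring_nf
        have h₂ : y ^ (t + a - 2) = y ^ (t - 2) * y ^ (a / 2) * y ^ (a / 2) := by
          rw [← Real.rpow_add hy₀, ← Real.rpow_add hy₀]; ring_nf
        simp only [h₁, h₂]
        ring
    _ = _ := by
      rw [integral_add hint_sub (hint _), integral_sub (hint _) ((hint _).const_mul 2),
        integral_const_mul, powBregman_eq_integral hm hx, powBregman_eq_integral hm hx,
        powBregman_eq_integral hm hx]

theorem momentMuIntegrand_nonneg (hm : 0 < m) (hx : 0 < x) (a t : ℝ) :
    0 ≤ momentMuIntegrand m a t x :=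
  setIntegral_nonneg measurableSet_uIoc fun y hy => by
    have hy₀ := pos_of_mem_uIcc hm hx (uIoc_subset_uIcc hy)
    positivity

theorem momentMuIntegrand_midpoint_sq_le (hm : 0 < m) (hx : 0 < x) (a t u : ℝ) :
    momentMuIntegrand m a ((t + u) / 2) x ^ 2 ≤
      momentMuIntegrand m a t x * momentMuIntegrand m a u x := by
  have hint := integrableOn_uIoc_abs_sub_mul_rpow hm hx (fun y => (1 - y ^ (a / 2)) ^ 2)
    ((continuousOn_const.sub (continuousOn_rpow_uIcc hm hx _)).pow 2)
  have hpos : ∀ᵐ y ∂volume.restrict (Ι m x), 0 < y := (ae_restrict_iff' measurableSet_uIoc).2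
    (ae_of_all _ fun y hy => pos_of_mem_uIcc hm hx (uIoc_subset_uIcc hy))
  refine sq_integral_le_integral_mul_integral (hint _) (hint _) ?_ ?_ ?_
  · filter_upwards [hpos] with y hy using by positivity
  · filter_upwards [hpos] with y hy using by positivity
  filter_upwards [hpos] with y hy
  have hmid : y ^ ((t + u) / 2 - 2) * y ^ ((t + u) / 2 - 2) = y ^ (t - 2) * y ^ (u - 2) := by
    rw [← Real.rpow_add hy, ← Real.rpow_add hy]; ring_nf
  exact le_of_eq (by linear_combination (|x - y| * (1 - y ^ (a / 2)) ^ 2) ^ 2 * hmid)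

end MomentMuIntegrand

section Moments

variable {Ω : Type*} [MeasurableSpace Ω] {μ : Measure Ω} {X : Ω → ℝ}

theorem integral_comp_sub_comp_integral_eq_integral_sub_tangent [IsProbabilityMeasure μ]
    {φ : ℝ → ℝ} (c : ℝ) (hX : Integrable X μ) (hφX : Integrable (fun ω => φ (X ω)) μ) :
    ∫ ω, φ (X ω) ∂μ - φ (∫ ω, X ω ∂μ) =
      ∫ ω, (φ (X ω) - φ (∫ ω, X ω ∂μ) - c * (X ω - ∫ ω, X ω ∂μ)) ∂μ := by
  have hφX_sub : Integrable (fun ω => φ (X ω) - φ (∫ ω, X ω ∂μ)) μ := hφX.sub (integrable_const _)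
  have hX_sub : Integrable (fun ω => c * (X ω - ∫ ω, X ω ∂μ)) μ :=
    (hX.sub (integrable_const _)).const_mul c
  rw [integral_sub hφX_sub hX_sub, integral_sub hφX (integrable_const _), integral_const_mul,
    integral_sub hX (integrable_const _)]
  simp

theorem momentLambda_eq_integral_powPotential_sub (s : ℝ) :
    momentLambda μ X s = ∫ ω, powPotential s (X ω) ∂μ - powPotential s (∫ ω, X ω ∂μ) := by
  unfold momentLambda powPotential
  rcases eq_or_ne s 0 with rfl | hs₀
  · simp only [↓reduceIte, integral_neg]
    ring
  rcases eq_or_ne s 1 with rfl | hs₁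
  · simp
  simp only [if_neg hs₀, if_neg hs₁, integral_div, sub_div]

theorem integrable_powPotential_comp (hmom : ∀ s : ℝ, Integrable (fun ω => X ω ^ s) μ)
    (hlog : Integrable (fun ω => Real.log (X ω)) μ)
    (hxlog : Integrable (fun ω => X ω * Real.log (X ω)) μ) (s : ℝ) :
    Integrable (fun ω => powPotential s (X ω)) μ := by
  unfold powPotential
  rcases eq_or_ne s 0 with rfl | hs₀
  · simpa using hlog.neg
  rcases eq_or_ne s 1 with rfl | hs₁
  · simpa using hxlog
  simpa only [if_neg hs₀, if_neg hs₁] using (hmom s).div_const _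

theorem integrable_powBregman_comp [IsFiniteMeasure μ]
    (hmom : ∀ s : ℝ, Integrable (fun ω => X ω ^ s) μ)
    (hlog : Integrable (fun ω => Real.log (X ω)) μ)
    (hxlog : Integrable (fun ω => X ω * Real.log (X ω)) μ) (s m : ℝ) :
    Integrable (fun ω => powBregman s m (X ω)) μ :=
  ((integrable_powPotential_comp hmom hlog hxlog s).sub (integrable_const _)).sub
    (((by simpa using hmom 1 : Integrable X μ).sub (integrable_const _)).const_mul _)

theorem momentLambda_eq_integral_powBregman [IsProbabilityMeasure μ]
    (hmom : ∀ s : ℝ, Integrable (fun ω => X ω ^ s) μ)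
    (hlog : Integrable (fun ω => Real.log (X ω)) μ)
    (hxlog : Integrable (fun ω => X ω * Real.log (X ω)) μ) (s : ℝ) :
    momentLambda μ X s = ∫ ω, powBregman s (∫ ω, X ω ∂μ) (X ω) ∂μ := by
  rw [momentLambda_eq_integral_powPotential_sub]
  exact integral_comp_sub_comp_integral_eq_integral_sub_tangent _ (by simpa using hmom 1)
    (integrable_powPotential_comp hmom hlog hxlog s)

theorem momentMuIntegrand_comp_ae_eq {m : ℝ} (hm : 0 < m) (hpos : ∀ᵐ ω ∂μ, 0 < X ω) (a t : ℝ) :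
    (fun ω => momentMuIntegrand m a t (X ω)) =ᵐ[μ] fun ω => powBregman t m (X ω) -
      2 * powBregman (t + a / 2) m (X ω) + powBregman (t + a) m (X ω) :=
  hpos.mono fun _ hω => momentMuIntegrand_eq hm hω a t

theorem integrable_momentMuIntegrand_comp [IsFiniteMeasure μ] {m : ℝ} (hm : 0 < m)
    (hpos : ∀ᵐ ω ∂μ, 0 < X ω) (hmom : ∀ s : ℝ, Integrable (fun ω => X ω ^ s) μ)
    (hlog : Integrable (fun ω => Real.log (X ω)) μ)
    (hxlog : Integrable (fun ω => X ω * Real.log (X ω)) μ) (a t : ℝ) :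
    Integrable (fun ω => momentMuIntegrand m a t (X ω)) μ := by
  have hB := integrable_powBregman_comp hmom hlog hxlog
  refine Integrable.congr ?_ (momentMuIntegrand_comp_ae_eq hm hpos a t).symm
  exact ((hB _ m).sub ((hB _ m).const_mul 2)).add (hB _ m)

theorem momentMu_eq_integral [IsProbabilityMeasure μ] (hpos : ∀ᵐ ω ∂μ, 0 < X ω)
    (hmom : ∀ s : ℝ, Integrable (fun ω => X ω ^ s) μ)
    (hlog : Integrable (fun ω => Real.log (X ω)) μ)
    (hxlog : Integrable (fun ω => X ω * Real.log (X ω)) μ) (a t : ℝ) :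
    momentMu μ X a t = ∫ ω, momentMuIntegrand (∫ ω, X ω ∂μ) a t (X ω) ∂μ := by
  have hm : 0 < ∫ ω, X ω ∂μ := integral_pos_of_ae_pos (by simpa using hmom 1) hpos
  have hB := integrable_powBregman_comp hmom hlog hxlog (μ := μ)
  have hB_sub : Integrable (fun ω => powBregman t (∫ ω, X ω ∂μ) (X ω) -
      2 * powBregman (t + a / 2) (∫ ω, X ω ∂μ) (X ω)) μ := (hB _ _).sub ((hB _ _).const_mul 2)
  rw [integral_congr_ae (momentMuIntegrand_comp_ae_eq hm hpos a t),
    integral_add hB_sub (hB _ _), integral_sub (hB _ _) ((hB _ _).const_mul 2), integral_const_mul]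
  simp only [momentMu, momentLambda_eq_integral_powBregman hmom hlog hxlog]

end Moments

theorem corollary1_general {Ω : Type*} [MeasurableSpace Ω] (μ : Measure Ω) [IsProbabilityMeasure μ]
    (X : Ω → ℝ) (hpos : ∀ᵐ ω ∂μ, 0 < X ω)
    (hmom : ∀ s : ℝ, Integrable (fun ω => X ω ^ s) μ)
    (hlog : Integrable (fun ω => Real.log (X ω)) μ)
    (hxlog : Integrable (fun ω => X ω * Real.log (X ω)) μ)
    (a : ℝ) (t u : ℝ) :
    momentMu μ X a t * momentMu μ X a u ≥ (momentMu μ X a ((t + u) / 2)) ^ 2 := by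
  have hm : 0 < ∫ ω, X ω ∂μ := integral_pos_of_ae_pos (by simpa using hmom 1) hpos
  have hint := integrable_momentMuIntegrand_comp hm hpos hmom hlog hxlog a
  simp only [ge_iff_le, momentMu_eq_integral hpos hmom hlog hxlog]
  exact sq_integral_le_integral_mul_integral (hint t) (hint u)
    (hpos.mono fun _ hω => momentMuIntegrand_nonneg hm hω a t)
    (hpos.mono fun _ hω => momentMuIntegrand_nonneg hm hω a u)
    (hpos.mono fun _ hω => momentMuIntegrand_midpoint_sq_le hm hω a t u)

theorem corollary1 {Ω : Type*} [MeasurableSpace Ω] (μ : Measure Ω) [IsProbabilityMeasure μ]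
    (X : Ω → ℝ) (hX : Measurable X) (hpos : ∀ᵐ ω ∂μ, 0 < X ω)
    (hmom : ∀ s : ℝ, Integrable (fun ω => X ω ^ s) μ)
    (hlog : Integrable (fun ω => Real.log (X ω)) μ)
    (hxlog : Integrable (fun ω => X ω * Real.log (X ω)) μ)
    (a : ℝ) (t u : ℝ) :
    momentMu μ X a t * momentMu μ X a u ≥ (momentMu μ X a ((t + u) / 2)) ^ 2 :=
  corollary1_general μ X hpos hmom hlog hxlog a t u
end

section
/- (Theorem 7, second inequality) For every real number s, K_s(p‖q) + K_s(q‖p) ≥ 4H², where H² = H²(p,q) denotes the squared Hellinger distance. -/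
/-- The relative divergence of type `s`, `K_s(p‖q)`. -/
noncomputable def relDiv {ι : Type*} (p q : ι → ℝ) (s : ℝ) : ℝ :=
  if s = 0 then ∑' i, q i * Real.log (q i / p i)
  else if s = 1 then ∑' i, p i * Real.log (p i / q i)
  else ((∑' i, p i ^ s * q i ^ (1 - s)) - 1) / (s * (s - 1))

/-- The squared Hellinger distance `H²(p,q)`. -/
noncomputable def hellingerSq {ι : Type*} (p q : ι → ℝ) : ℝ :=
  ∑' i, (Real.sqrt (p i) - Real.sqrt (q i)) ^ 2

/-! Everything reduces to an inequality between two positive numbers `x, y`, summed over `i`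
(`∑ p = ∑ q = 1` absorbs the constants). Write `x = E e^a`, `y = E e^{-a}` with `E = √(xy)`, and
`t = 2s - 1`. Then `(√x - √y)² = 2E (cosh a - 1)`, `x^s y^{1-s} + y^s x^{1-s} = 2E cosh (t a)` and
`4 s (s - 1) = t² - 1`, so the claim becomes `cosh (t a) - 1 ≥ t² (cosh a - 1)` for `|t| > 1` and
the reverse inequality for `|t| < 1`. As `cosh u - 1 = 2 sinh² (u / 2)`, both follow from
`sinh (λ b) ≤ λ sinh b` for `0 ≤ λ ≤ 1`, `b ≥ 0`: convexity of `sinh` on `[0, ∞)`. The cases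
`s ∈ {0, 1}` are the limit `|t| = 1`, where the claim `2 (cosh a - 1) ≤ a sinh a` reduces to the
tangent-line bound `sinh b ≤ b cosh b` of the same convex function. -/

open Real

namespace Real

theorem convexOn_sinh : ConvexOn ℝ (Set.Ici 0) sinh := by
  refine MonotoneOn.convexOn_of_deriv (convex_Ici 0) continuous_sinh.continuousOn
    differentiable_sinh.differentiableOn ?_
  rw [deriv_sinh, interior_Ici]
  intro x hx y hy hxy
  exact cosh_le_cosh.2 (by rwa [abs_of_pos hx, abs_of_pos hy])

theorem sinh_mul_le_mul_sinh {t x : ℝ} (ht₀ : 0 ≤ t) (ht₁ : t ≤ 1) (hx : 0 ≤ x) :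
    sinh (t * x) ≤ t * sinh x := by
  simpa using convexOn_sinh.2 hx Set.self_mem_Ici ht₀ (sub_nonneg.2 ht₁) (add_sub_cancel t 1)

theorem sinh_le_mul_cosh {x : ℝ} (hx : 0 ≤ x) : sinh x ≤ x * cosh x := by
  rcases hx.eq_or_lt with rfl | hx
  · simp
  have := convexOn_sinh.slope_le_of_hasDerivAt Set.self_mem_Ici hx.le hx (hasDerivAt_sinh x)
  rwa [slope_def_field, sinh_zero, sub_zero, sub_zero, div_le_iff₀ hx, mul_comm] at this

theorem sinh_mul_sq_le {t : ℝ} (ht : t ^ 2 ≤ 1) (x : ℝ) :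
    sinh (t * x) ^ 2 ≤ t ^ 2 * sinh x ^ 2 := by
  rw [← sq_abs (sinh (t * x)), abs_sinh, abs_mul, ← sq_abs t, ← sq_abs (sinh x), abs_sinh,
    ← mul_pow]
  exact pow_le_pow_left₀ (sinh_nonneg_iff.2 (by positivity))
    (sinh_mul_le_mul_sinh (abs_nonneg t) ((sq_le_one_iff_abs_le_one t).1 ht) (abs_nonneg x)) 2

theorem le_sinh_mul_sq {t : ℝ} (ht : 1 ≤ t ^ 2) (x : ℝ) :
    t ^ 2 * sinh x ^ 2 ≤ sinh (t * x) ^ 2 := by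
  have ht₀ : t ≠ 0 := by rintro rfl; norm_num at ht
  have := sinh_mul_sq_le (t := t⁻¹) (by rw [inv_pow]; exact inv_le_one_of_one_le₀ ht) (t * x)
  rwa [inv_mul_cancel_left₀ ht₀, inv_pow, le_inv_mul_iff₀ (by positivity)] at this

theorem cosh_sub_one (x : ℝ) : cosh x - 1 = 2 * sinh (x / 2) ^ 2 := by
  have := cosh_two_mul (x / 2)
  rw [mul_div_cancel₀ x two_ne_zero, cosh_sq] at this
  linarith

theorem cosh_sub_one_le_div {t : ℝ} (ht : t ^ 2 ≠ 1) (x : ℝ) :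
    cosh x - 1 ≤ (cosh (t * x) - cosh x) / (t ^ 2 - 1) := by
  have hx := cosh_sub_one x
  have htx := cosh_sub_one (t * x)
  rw [mul_div_assoc] at htx
  rcases ht.lt_or_gt with ht | ht
  · rw [le_div_iff_of_neg (by linarith)]
    nlinarith [sinh_mul_sq_le ht.le (x / 2)]
  · rw [le_div_iff₀ (by linarith)]
    nlinarith [le_sinh_mul_sq ht.le (x / 2)]

theorem two_mul_cosh_sub_one_le (x : ℝ) : 2 * (cosh x - 1) ≤ x * sinh x := by
  wlog hx : 0 ≤ x
  · simpa using this (-x) (by linarith)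
  have hhalf := sinh_le_mul_cosh (x := x / 2) (by positivity)
  have hdouble := sinh_two_mul (x / 2)
  rw [mul_div_cancel₀ x two_ne_zero] at hdouble
  rw [cosh_sub_one, hdouble]
  nlinarith [sinh_nonneg_iff.2 (by positivity : 0 ≤ x / 2)]

end Real

theorem exists_eq_mul_exp_of_pos {x y : ℝ} (hx : 0 < x) (hy : 0 < y) :
    ∃ E a : ℝ, 0 < E ∧ x = E * exp a ∧ y = E * exp (-a) := by
  refine ⟨exp ((log x + log y) / 2), (log x - log y) / 2, exp_pos _, ?_, ?_⟩
  · rw [← exp_add]; convert (exp_log hx).symm using 2; ring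
  · rw [← exp_add]; convert (exp_log hy).symm using 2; ring

theorem sqrt_mul_exp_sub_sqrt_mul_exp_neg_sq {E : ℝ} (hE : 0 ≤ E) (a : ℝ) :
    (√(E * exp a) - √(E * exp (-a))) ^ 2 = 2 * E * (cosh a - 1) := by
  have hprod : √(E * exp a) * √(E * exp (-a)) = E := by
    rw [← sqrt_mul (by positivity), mul_mul_mul_comm, ← exp_add, add_neg_cancel, exp_zero,
      mul_one, sqrt_mul_self hE]
  rw [sub_sq, sq_sqrt (by positivity), sq_sqrt (by positivity), mul_assoc 2, hprod, cosh_eq]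
  ring

theorem mul_exp_rpow_mul_mul_exp_neg_rpow {E : ℝ} (hE : 0 < E) (a s : ℝ) :
    (E * exp a) ^ s * (E * exp (-a)) ^ (1 - s) = E * exp ((2 * s - 1) * a) := by
  rw [mul_rpow hE.le (exp_pos _).le, mul_rpow hE.le (exp_pos _).le, ← exp_mul, ← exp_mul]
  calc E ^ s * exp (a * s) * (E ^ (1 - s) * exp (-a * (1 - s)))
      = E ^ (s + (1 - s)) * exp (a * s + -a * (1 - s)) := by rw [rpow_add hE, exp_add]; ring
    _ = E * exp ((2 * s - 1) * a) := by rw [add_sub_cancel, rpow_one]; ring_nf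

theorem four_mul_sqrt_sub_sqrt_sq_le_div {x y s : ℝ} (hx : 0 < x) (hy : 0 < y) (hs₀ : s ≠ 0)
    (hs₁ : s ≠ 1) :
    4 * (√x - √y) ^ 2 ≤ (x ^ s * y ^ (1 - s) + y ^ s * x ^ (1 - s) - x - y) / (s * (s - 1)) := by
  obtain ⟨E, a, hE, rfl, rfl⟩ := exists_eq_mul_exp_of_pos hx hy
  have ht : (2 * s - 1) ^ 2 - 1 = 4 * (s * (s - 1)) := by ring
  have hss : s * (s - 1) ≠ 0 := mul_ne_zero hs₀ (sub_ne_zero.2 hs₁)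
  have hcosh := cosh_sub_one_le_div (t := 2 * s - 1) (by rw [← sub_ne_zero, ht]; positivity) a
  have hnum : (E * exp a) ^ s * (E * exp (-a)) ^ (1 - s)
      + (E * exp (-a)) ^ s * (E * exp a) ^ (1 - s) - E * exp a - E * exp (-a)
      = 2 * E * (cosh ((2 * s - 1) * a) - cosh a) := by
    have hswap := mul_exp_rpow_mul_mul_exp_neg_rpow hE (-a) s
    rw [neg_neg] at hswap
    rw [mul_exp_rpow_mul_mul_exp_neg_rpow hE, hswap, cosh_eq, cosh_eq]
    ring_nf
  rw [sqrt_mul_exp_sub_sqrt_mul_exp_neg_sq hE.le, hnum]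
  calc 4 * (2 * E * (cosh a - 1))
      ≤ 8 * E * ((cosh ((2 * s - 1) * a) - cosh a) / ((2 * s - 1) ^ 2 - 1)) := by
        nlinarith
    _ = _ := by rw [ht]; field_simp; ring

theorem four_mul_sqrt_sub_sqrt_sq_le_log {x y : ℝ} (hx : 0 < x) (hy : 0 < y) :
    4 * (√x - √y) ^ 2 ≤ x * log (x / y) + y * log (y / x) := by
  obtain ⟨E, a, hE, rfl, rfl⟩ := exists_eq_mul_exp_of_pos hx hy
  have hlog (b : ℝ) : log (E * exp b / (E * exp (-b))) = 2 * b := by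
    rw [mul_div_mul_left _ _ hE.ne', ← exp_sub, log_exp]; ring
  have hswap := hlog (-a)
  rw [neg_neg] at hswap
  rw [sqrt_mul_exp_sub_sqrt_mul_exp_neg_sq hE.le, hlog, hswap]
  have := mul_le_mul_of_nonneg_left (two_mul_cosh_sub_one_le a) hE.le
  rw [sinh_eq] at this
  nlinarith

section Divergences

variable {ι : Type*} {p q : ι → ℝ}

theorem relDiv_zero : relDiv p q 0 = relDiv q p 1 := by
  simp [relDiv]

theorem hasSum_relDiv_add_relDiv {s : ℝ} (hs₀ : s ≠ 0) (hs₁ : s ≠ 1) (hp : HasSum p 1)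
    (hq : HasSum q 1) {A B : ℝ} (hpq : HasSum (fun i => p i ^ s * q i ^ (1 - s)) A)
    (hqp : HasSum (fun i => q i ^ s * p i ^ (1 - s)) B) :
    HasSum
      (fun i => (p i ^ s * q i ^ (1 - s) + q i ^ s * p i ^ (1 - s) - p i - q i) / (s * (s - 1)))
      (relDiv p q s + relDiv q p s) := by
  rw [relDiv, relDiv, if_neg hs₀, if_neg hs₁, if_neg hs₀, if_neg hs₁, ← add_div, hpq.tsum_eq,
    hqp.tsum_eq, show A - 1 + (B - 1) = A + B - 1 - 1 by ring]
  exact (((hpq.add hqp).sub hp).sub hq).div_const (s * (s - 1))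

theorem four_mul_hellingerSq_le_of_hasSum {f : ι → ℝ} {c : ℝ} (hf : HasSum f c)
    (h : ∀ i, 4 * (√(p i) - √(q i)) ^ 2 ≤ f i) : 4 * hellingerSq p q ≤ c := by
  rw [hellingerSq, ← tsum_mul_left, ← hf.tsum_eq]
  exact (hf.summable.of_nonneg_of_le (fun i => by positivity) h).tsum_le_tsum h hf.summable

end Divergences

theorem theorem7_second_general {ι : Type*} (p q : ι → ℝ)
    (hp : ∀ i, 0 < p i) (hq : ∀ i, 0 < q i)
    (hp1 : ∑' i, p i = 1) (hq1 : ∑' i, q i = 1)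
    (hmom : ∀ s : ℝ, Summable (fun i => p i ^ s * q i ^ (1 - s)))
    (hpq : Summable (fun i => p i * Real.log (p i / q i)))
    (hqp : Summable (fun i => q i * Real.log (q i / p i)))
    (s : ℝ) :
    relDiv p q s + relDiv q p s ≥ 4 * hellingerSq p q := by
  have hone : 4 * hellingerSq p q ≤ relDiv p q 1 + relDiv q p 1 :=
    four_mul_hellingerSq_le_of_hasSum (by simpa [relDiv] using hpq.hasSum.add hqp.hasSum)
      fun i => four_mul_sqrt_sub_sqrt_sq_le_log (hp i) (hq i)
  rcases eq_or_ne s 0 with rfl | hs₀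
  · rwa [ge_iff_le, relDiv_zero, relDiv_zero, add_comm]
  rcases eq_or_ne s 1 with rfl | hs₁
  · exact hone
  have hp' : HasSum p 1 := hp1 ▸ (by simpa using hmom 1 : Summable p).hasSum
  have hq' : HasSum q 1 := hq1 ▸ (by simpa using hmom 0 : Summable q).hasSum
  have hqp' : Summable fun i => q i ^ s * p i ^ (1 - s) := by
    simpa [mul_comm] using hmom (1 - s)
  exact four_mul_hellingerSq_le_of_hasSum
    (hasSum_relDiv_add_relDiv hs₀ hs₁ hp' hq' (hmom s).hasSum hqp'.hasSum)
    fun i => four_mul_sqrt_sub_sqrt_sq_le_div (hp i) (hq i) hs₀ hs₁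

theorem theorem7_second {ι : Type*} [Countable ι] (p q : ι → ℝ)
    (hp : ∀ i, 0 < p i) (hq : ∀ i, 0 < q i)
    (hp1 : ∑' i, p i = 1) (hq1 : ∑' i, q i = 1)
    (hmom : ∀ s : ℝ, Summable (fun i => p i ^ s * q i ^ (1 - s)))
    (hpq : Summable (fun i => p i * Real.log (p i / q i)))
    (hqp : Summable (fun i => q i * Real.log (q i / p i)))
    (s : ℝ) :
    relDiv p q s + relDiv q p s ≥ 4 * hellingerSq p q :=
  theorem7_second_general p q hp hq hp1 hq1 hmom hpq hqp s
end

section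
/- (Theorem 8, first estimate) For all real numbers a and b, |S_a − S_b| ≤ (S_{a+b−1/2} · S_{a−b+1/2})^{1/2}, where S_a := K_a(p‖q) + K_a(q‖p) − 4H². -/
/-- `S_a := K_a(p‖q) + K_a(q‖p) - 4H²`. -/
noncomputable def symS {ι : Type*} (p q : ι → ℝ) (a : ℝ) : ℝ :=
  relDiv p q a + relDiv q p a - 4 * hellingerSq p q

/-!
Write `pᵢ = rᵢ e^tᵢ` and `qᵢ = rᵢ e^(-tᵢ)` with `rᵢ = √(pᵢqᵢ)` and `tᵢ = log(pᵢ/qᵢ)/2`. Then the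
`i`-th term of `S_a` is `8 rᵢ G(2a - 1, tᵢ)`, where `G(γ, t) = ∫₀ᵗ (cosh γs - 1) sinh(t - s) ds`.
Since `cosh αs - cosh βs = 2 sinh((α + β)s/2) sinh((α - β)s/2)` and `cosh γs - 1 = 2 sinh²(γs/2)`,
Cauchy–Schwarz with the weight `2 sinh(t - s)` gives `(G(α,t) - G(β,t))² ≤ G(α+β,t) G(α-β,t)`.
Cauchy–Schwarz for the sum over `i` then gives the theorem, with `α = 2a - 1` and `β = 2b - 1`.
-/

open Real MeasureTheory Filter

theorem sq_integral_mul_le {α : Type*} [MeasurableSpace α] {μ : Measure α} {f g w : α → ℝ}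
    (hw : 0 ≤ᵐ[μ] w) (hff : Integrable (fun x => f x ^ 2 * w x) μ)
    (hgg : Integrable (fun x => g x ^ 2 * w x) μ) (hfg : Integrable (fun x => f x * g x * w x) μ) :
    (∫ x, f x * g x * w x ∂μ) ^ 2 ≤ (∫ x, f x ^ 2 * w x ∂μ) * ∫ x, g x ^ 2 * w x ∂μ := by
  have hquad : ∀ l : ℝ, 0 ≤ (∫ x, g x ^ 2 * w x ∂μ) * (l * l)
      + (-2 * ∫ x, f x * g x * w x ∂μ) * l + ∫ x, f x ^ 2 * w x ∂μ := by
    intro l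
    have h0 : 0 ≤ ∫ x, (l * g x - f x) ^ 2 * w x ∂μ :=
      integral_nonneg_of_ae (hw.mono fun x hx => mul_nonneg (sq_nonneg _) hx)
    have hexp : (fun x => (l * g x - f x) ^ 2 * w x) =
        fun x => l * l * (g x ^ 2 * w x) + -2 * l * (f x * g x * w x) + f x ^ 2 * w x := by
      ext x; ring
    rw [hexp, integral_add (by fun_prop) hff, integral_add (by fun_prop) (by fun_prop),
      integral_const_mul, integral_const_mul] at h0
    linarith
  have := discrim_le_zero hquad
  rw [discrim] at this
  linarith

theorem sq_le_mul_of_hasSum {ι : Type*} {r f g : ι → ℝ} {R F G : ℝ} (hr : HasSum r R)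
    (hf : HasSum f F) (hg : HasSum g G) (hf0 : ∀ i, 0 ≤ f i) (hg0 : ∀ i, 0 ≤ g i)
    (hrfg : ∀ i, r i ^ 2 ≤ f i * g i) : R ^ 2 ≤ F * G :=
  le_of_tendsto_of_tendsto' (hr.pow 2) (Tendsto.mul hf hg) fun s =>
    Finset.sum_sq_le_sum_mul_sum_of_sq_le_mul s (fun i _ => hf0 i) (fun i _ => hg0 i)
      fun i _ => hrfg i

theorem abs_sub_le_sqrt_mul_of_hasSum {ι : Type*} {u v f g : ι → ℝ} {U V F G : ℝ}
    (hu : HasSum u U) (hv : HasSum v V) (hf : HasSum f F) (hg : HasSum g G)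
    (hf0 : ∀ i, 0 ≤ f i) (hg0 : ∀ i, 0 ≤ g i) (huv : ∀ i, (u i - v i) ^ 2 ≤ f i * g i) :
    |U - V| ≤ √(F * G) := by
  obtain ⟨R, hR⟩ := (hu.sub hv).summable.abs
  have hUV : |U - V| ≤ R := abs_le.2
    ⟨neg_le.1 (hasSum_le (fun i => neg_le_abs _) (hu.sub hv).neg hR),
      hasSum_le (fun i => le_abs_self _) (hu.sub hv) hR⟩
  have hR2 : R ^ 2 ≤ F * G :=
    sq_le_mul_of_hasSum hR hf hg hf0 hg0 fun i => by rw [sq_abs]; exact huv i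
  exact hUV.trans ((le_abs_self R).trans (abs_le_sqrt hR2))

theorem cosh_sub_cosh (x y : ℝ) :
    cosh x - cosh y = 2 * sinh ((x + y) / 2) * sinh ((x - y) / 2) := by
  have hx : cosh x = cosh ((x + y) / 2 + (x - y) / 2) := by ring_nf
  have hy : cosh y = cosh ((x + y) / 2 - (x - y) / 2) := by ring_nf
  rw [hx, hy, cosh_add, cosh_sub]
  ring

theorem sqrt_sub_sqrt_sq {x y : ℝ} (hx : 0 ≤ x) (hy : 0 ≤ y) :
    (√x - √y) ^ 2 = x + y - 2 * √(x * y) := by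
  rw [sub_sq, sq_sqrt hx, sq_sqrt hy, sqrt_mul hx]
  ring

theorem rpow_mul_rpow_one_sub {x y : ℝ} (hx : 0 < x) (hy : 0 < y) (a : ℝ) :
    x ^ a * y ^ (1 - a) = √(x * y) * exp ((2 * a - 1) * (log (x / y) / 2)) := by
  rw [rpow_def_of_pos hx, rpow_def_of_pos hy, sqrt_eq_rpow, rpow_def_of_pos (mul_pos hx hy),
    ← exp_add, ← exp_add, log_mul hx.ne' hy.ne', log_div hx.ne' hy.ne']
  ring_nf

theorem sqrt_mul_mul_exp_half_log_div {x y : ℝ} (hx : 0 < x) (hy : 0 < y) :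
    √(x * y) * exp (log (x / y) / 2) = x ∧ √(x * y) * exp (-(log (x / y) / 2)) = y := by
  have h1 := rpow_mul_rpow_one_sub hx hy 1
  have h0 := rpow_mul_rpow_one_sub hx hy 0
  norm_num at h1 h0
  exact ⟨h1.symm, h0.symm⟩

noncomputable def coshKernel (γ T : ℝ) : ℝ :=
  ∫ s in (0 : ℝ)..T, (cosh (γ * s) - 1) * sinh (T - s)

theorem coshKernel_neg_left (γ T : ℝ) : coshKernel (-γ) T = coshKernel γ T := by
  simp only [coshKernel, neg_mul, cosh_neg]

theorem coshKernel_neg_right (γ T : ℝ) : coshKernel γ (-T) = coshKernel γ T := by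
  have h := intervalIntegral.integral_comp_neg (a := T) (b := 0)
    fun s => (cosh (γ * s) - 1) * sinh (-T - s)
  rw [neg_zero] at h
  rw [coshKernel, coshKernel, ← h, intervalIntegral.integral_symm, ← intervalIntegral.integral_neg]
  congr 1
  ext s
  rw [mul_neg, cosh_neg, show -T - -s = -(T - s) by ring, sinh_neg, mul_neg, neg_neg]

theorem coshKernel_abs_right (γ T : ℝ) : coshKernel γ |T| = coshKernel γ T := by
  rcases abs_choice T with h | h <;> rw [h]
  exact coshKernel_neg_right γ T

theorem coshKernel_eq_of_sq_ne_one {γ : ℝ} (hγ : γ ^ 2 ≠ 1) (T : ℝ) :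
    coshKernel γ T = (cosh (γ * T) - cosh T) / (γ ^ 2 - 1) - (cosh T - 1) := by
  have hγ' : γ ^ 2 - 1 ≠ 0 := sub_ne_zero.2 hγ
  have hderiv : ∀ s, HasDerivAt
      (fun s => (γ * sinh (γ * s) * sinh (T - s) + cosh (γ * s) * cosh (T - s)) / (γ ^ 2 - 1)
        + cosh (T - s))
      ((cosh (γ * s) - 1) * sinh (T - s)) s := by
    intro s
    have hlin : HasDerivAt (fun s => γ * s) γ s := by simpa using (hasDerivAt_id s).const_mul γ
    have hrev : HasDerivAt (fun s => T - s) (-1) s := by simpa using (hasDerivAt_id s).const_sub T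
    have h := ((((hlin.sinh.const_mul γ).mul hrev.sinh).add (hlin.cosh.mul hrev.cosh)).div_const
      (γ ^ 2 - 1)).add hrev.cosh
    refine h.congr_deriv ?_
    field_simp
    ring
  rw [coshKernel, intervalIntegral.integral_eq_sub_of_hasDerivAt (fun s _ => hderiv s)
    (by apply Continuous.intervalIntegrable; fun_prop)]
  simp only [mul_zero, sinh_zero, cosh_zero, sub_zero, sub_self]
  field_simp
  ring

theorem coshKernel_one (T : ℝ) : coshKernel 1 T = T * sinh T / 2 - (cosh T - 1) := by
  have hderiv : ∀ s, HasDerivAt (fun s => (s * sinh T - cosh (T - 2 * s) / 2) / 2 + cosh (T - s))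
      ((cosh (1 * s) - 1) * sinh (T - s)) s := by
    intro s
    have hrev : HasDerivAt (fun s => T - s) (-1) s := by simpa using (hasDerivAt_id s).const_sub T
    have hrev2 : HasDerivAt (fun s => T - 2 * s) (-2) s := by
      simpa using ((hasDerivAt_id s).const_mul 2).const_sub T
    have h := ((((hasDerivAt_id s).mul_const (sinh T)).sub (hrev2.cosh.div_const 2)).div_const
      2).add hrev.cosh
    refine h.congr_deriv ?_
    rw [show T - 2 * s = T - s - s by ring]
    simp only [one_mul, sinh_sub, cosh_sub]
    linear_combination (-sinh T / 2) * cosh_sq_sub_sinh_sq s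
  rw [coshKernel, intervalIntegral.integral_eq_sub_of_hasDerivAt (fun s _ => hderiv s)
    (by apply Continuous.intervalIntegrable; fun_prop)]
  rw [show T - 2 * T = -T by ring, cosh_neg]
  simp only [mul_zero, cosh_zero, sub_zero, zero_mul, sub_self]
  ring

theorem coshKernel_zero_left (T : ℝ) : coshKernel 0 T = 0 := by
  simp [coshKernel]

theorem coshKernel_sub_coshKernel (α β T : ℝ) :
    coshKernel α T - coshKernel β T =
      ∫ s in (0 : ℝ)..T, sinh ((α + β) * s / 2) * sinh ((α - β) * s / 2) * (2 * sinh (T - s)) := by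
  rw [coshKernel, coshKernel, ← intervalIntegral.integral_sub
    (by apply Continuous.intervalIntegrable; fun_prop)
    (by apply Continuous.intervalIntegrable; fun_prop)]
  congr 1
  ext s
  rw [← sub_mul, sub_sub_sub_cancel_right, cosh_sub_cosh]
  ring_nf

theorem coshKernel_eq_integral_sinh_sq (γ T : ℝ) :
    coshKernel γ T = ∫ s in (0 : ℝ)..T, sinh (γ * s / 2) ^ 2 * (2 * sinh (T - s)) := by
  simpa [coshKernel_zero_left, sq] using coshKernel_sub_coshKernel γ 0 T

theorem coshKernel_nonneg (γ T : ℝ) : 0 ≤ coshKernel γ T := by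
  rw [← coshKernel_abs_right, coshKernel_eq_integral_sinh_sq]
  refine intervalIntegral.integral_nonneg (abs_nonneg T) fun s hs => ?_
  have : 0 ≤ sinh (|T| - s) := sinh_nonneg_iff.2 (by linarith [hs.2])
  positivity

theorem sq_coshKernel_sub_le (α β T : ℝ) :
    (coshKernel α T - coshKernel β T) ^ 2 ≤ coshKernel (α + β) T * coshKernel (α - β) T := by
  rw [← coshKernel_abs_right α, ← coshKernel_abs_right β, ← coshKernel_abs_right (α + β),
    ← coshKernel_abs_right (α - β), coshKernel_sub_coshKernel, coshKernel_eq_integral_sinh_sq,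
    coshKernel_eq_integral_sinh_sq, intervalIntegral.integral_of_le (abs_nonneg T),
    intervalIntegral.integral_of_le (abs_nonneg T), intervalIntegral.integral_of_le (abs_nonneg T)]
  have hint : ∀ {h : ℝ → ℝ}, Continuous h → Integrable h (volume.restrict (Set.Ioc 0 |T|)) :=
    fun hc => (hc.intervalIntegrable 0 |T|).1
  refine sq_integral_mul_le ?_ (hint (by fun_prop)) (hint (by fun_prop)) (hint (by fun_prop))
  refine (ae_restrict_mem measurableSet_Ioc).mono fun s hs => ?_
  have : 0 ≤ sinh (|T| - s) := sinh_nonneg_iff.2 (by linarith [hs.2])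
  simp only [Pi.zero_apply]
  positivity

theorem rpow_symm_sub_hellinger {x y a : ℝ} (hx : 0 < x) (hy : 0 < y) (ha0 : a ≠ 0) (ha1 : a ≠ 1) :
    (x ^ a * y ^ (1 - a) + y ^ a * x ^ (1 - a) - (x + y)) / (a * (a - 1)) - 4 * (√x - √y) ^ 2 =
      8 * √(x * y) * coshKernel (2 * a - 1) (log (x / y) / 2) := by
  have ha : a * (a - 1) ≠ 0 := mul_ne_zero ha0 (sub_ne_zero.2 ha1)
  have hγ : (2 * a - 1) ^ 2 - 1 ≠ 0 := by contrapose! ha; linear_combination ha / 4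
  have hyx := rpow_mul_rpow_one_sub hx hy (1 - a)
  rw [sub_sub_cancel, mul_comm] at hyx
  rw [rpow_mul_rpow_one_sub hx hy a, hyx, sqrt_sub_sqrt_sq hx.le hy.le,
    coshKernel_eq_of_sq_ne_one (sub_ne_zero.1 hγ)]
  obtain ⟨hx', hy'⟩ := sqrt_mul_mul_exp_half_log_div hx hy
  set r := √(x * y)
  set t := log (x / y) / 2
  rw [← hx', ← hy', cosh_eq, cosh_eq]
  field_simp
  ring_nf

theorem log_symm_sub_hellinger {x y : ℝ} (hx : 0 < x) (hy : 0 < y) :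
    x * log (x / y) + y * log (y / x) - 4 * (√x - √y) ^ 2 =
      8 * √(x * y) * coshKernel 1 (log (x / y) / 2) := by
  have hlog : log (y / x) = -log (x / y) := by rw [← log_inv, inv_div]
  rw [hlog, sqrt_sub_sqrt_sq hx.le hy.le, coshKernel_one]
  obtain ⟨hx', hy'⟩ := sqrt_mul_mul_exp_half_log_div hx hy
  set r := √(x * y)
  set t := log (x / y) / 2
  rw [show log (x / y) = 2 * t by ring, ← hx', ← hy', cosh_eq, sinh_eq]
  ring

section

variable {ι : Type*} {p q : ι → ℝ}

theorem hasSum_hellingerSq (hp : ∀ i, 0 ≤ p i) (hq : ∀ i, 0 ≤ q i) (hsp : Summable p)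
    (hsq : Summable q) : HasSum (fun i => (√(p i) - √(q i)) ^ 2) (hellingerSq p q) :=
  (hsp.add hsq).of_nonneg_of_le (fun i => sq_nonneg _)
    (fun i => by rw [sqrt_sub_sqrt_sq (hp i) (hq i)]; linarith [sqrt_nonneg (p i * q i)]) |>.hasSum

theorem hasSum_symS_of_eq_zero_or_eq_one (hp : ∀ i, 0 < p i) (hq : ∀ i, 0 < q i)
    (hmom : ∀ s : ℝ, Summable (fun i => p i ^ s * q i ^ (1 - s)))
    (hpq : Summable (fun i => p i * log (p i / q i)))
    (hqp : Summable (fun i => q i * log (q i / p i))) {a : ℝ} (ha : a = 0 ∨ a = 1) :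
    HasSum (fun i => 8 * √(p i * q i) * coshKernel (2 * a - 1) (log (p i / q i) / 2))
      (symS p q a) := by
  have hH := hasSum_hellingerSq (fun i => (hp i).le) (fun i => (hq i).le)
    (by simpa using hmom 1) (by simpa using hmom 0)
  have hK : relDiv p q a + relDiv q p a =
      ∑' i, p i * log (p i / q i) + ∑' i, q i * log (q i / p i) := by
    rcases ha with rfl | rfl <;> simp [relDiv, add_comm]
  have hγ : ∀ T, coshKernel (2 * a - 1) T = coshKernel 1 T := by
    rcases ha with rfl | rfl <;> intro T
    · simpa using coshKernel_neg_left 1 T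
    · norm_num
  have hterm : (fun i => 8 * √(p i * q i) * coshKernel (2 * a - 1) (log (p i / q i) / 2)) =
      fun i => p i * log (p i / q i) + q i * log (q i / p i) - 4 * (√(p i) - √(q i)) ^ 2 := by
    funext i
    rw [hγ, log_symm_sub_hellinger (hp i) (hq i)]
  rw [hterm, symS, hK]
  exact (hpq.hasSum.add hqp.hasSum).sub (hH.mul_left 4)

theorem hasSum_symS_of_ne_zero_of_ne_one (hp : ∀ i, 0 < p i) (hq : ∀ i, 0 < q i)
    (hp1 : ∑' i, p i = 1) (hq1 : ∑' i, q i = 1)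
    (hmom : ∀ s : ℝ, Summable (fun i => p i ^ s * q i ^ (1 - s))) {a : ℝ} (ha0 : a ≠ 0)
    (ha1 : a ≠ 1) :
    HasSum (fun i => 8 * √(p i * q i) * coshKernel (2 * a - 1) (log (p i / q i) / 2))
      (symS p q a) := by
  have hsp : Summable p := by simpa using hmom 1
  have hsq : Summable q := by simpa using hmom 0
  have hH := hasSum_hellingerSq (fun i => (hp i).le) (fun i => (hq i).le) hsp hsq
  have hqa : Summable fun i => q i ^ a * p i ^ (1 - a) := by
    simpa [mul_comm] using hmom (1 - a)
  have hterm : (fun i => 8 * √(p i * q i) * coshKernel (2 * a - 1) (log (p i / q i) / 2)) =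
      fun i => (p i ^ a * q i ^ (1 - a) + q i ^ a * p i ^ (1 - a) - (p i + q i)) / (a * (a - 1))
        - 4 * (√(p i) - √(q i)) ^ 2 := by
    funext i
    rw [rpow_symm_sub_hellinger (hp i) (hq i) ha0 ha1]
  have hK : relDiv p q a + relDiv q p a = ((∑' i, p i ^ a * q i ^ (1 - a)) +
      (∑' i, q i ^ a * p i ^ (1 - a)) - ((∑' i, p i) + ∑' i, q i)) / (a * (a - 1)) := by
    rw [relDiv, relDiv, if_neg ha0, if_neg ha1, if_neg ha0, if_neg ha1, hp1, hq1]
    ring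
  rw [hterm, symS, hK]
  exact (((hmom a).hasSum.add hqa.hasSum).sub (hsp.hasSum.add hsq.hasSum)).div_const
    (a * (a - 1)) |>.sub (hH.mul_left 4)

theorem hasSum_symS (hp : ∀ i, 0 < p i) (hq : ∀ i, 0 < q i)
    (hp1 : ∑' i, p i = 1) (hq1 : ∑' i, q i = 1)
    (hmom : ∀ s : ℝ, Summable (fun i => p i ^ s * q i ^ (1 - s)))
    (hpq : Summable (fun i => p i * log (p i / q i)))
    (hqp : Summable (fun i => q i * log (q i / p i))) (a : ℝ) :
    HasSum (fun i => 8 * √(p i * q i) * coshKernel (2 * a - 1) (log (p i / q i) / 2))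
      (symS p q a) := by
  by_cases ha : a = 0 ∨ a = 1
  · exact hasSum_symS_of_eq_zero_or_eq_one hp hq hmom hpq hqp ha
  · push Not at ha
    exact hasSum_symS_of_ne_zero_of_ne_one hp hq hp1 hq1 hmom ha.1 ha.2

end

theorem theorem8_first_general {ι : Type*} (p q : ι → ℝ)
    (hp : ∀ i, 0 < p i) (hq : ∀ i, 0 < q i)
    (hp1 : ∑' i, p i = 1) (hq1 : ∑' i, q i = 1)
    (hmom : ∀ s : ℝ, Summable (fun i => p i ^ s * q i ^ (1 - s)))
    (hpq : Summable (fun i => p i * Real.log (p i / q i)))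
    (hqp : Summable (fun i => q i * Real.log (q i / p i)))
    (a b : ℝ) :
    |symS p q a - symS p q b| ≤
      Real.sqrt (symS p q (a + b - 1 / 2) * symS p q (a - b + 1 / 2)) := by
  have hS := hasSum_symS hp hq hp1 hq1 hmom hpq hqp
  have hweight : ∀ i, 0 ≤ 8 * √(p i * q i) := fun i => by positivity
  refine abs_sub_le_sqrt_mul_of_hasSum (hS a) (hS b) (hS _) (hS _)
    (fun i => mul_nonneg (hweight i) (coshKernel_nonneg _ _))
    (fun i => mul_nonneg (hweight i) (coshKernel_nonneg _ _)) fun i => ?_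
  rw [show 2 * (a + b - 1 / 2) - 1 = (2 * a - 1) + (2 * b - 1) by ring,
    show 2 * (a - b + 1 / 2) - 1 = (2 * a - 1) - (2 * b - 1) by ring, ← mul_sub,
    mul_mul_mul_comm, mul_pow, ← sq]
  exact mul_le_mul_of_nonneg_left (sq_coshKernel_sub_le _ _ _) (sq_nonneg _)

theorem theorem8_first {ι : Type*} [Countable ι] (p q : ι → ℝ)
    (hp : ∀ i, 0 < p i) (hq : ∀ i, 0 < q i)
    (hp1 : ∑' i, p i = 1) (hq1 : ∑' i, q i = 1)
    (hmom : ∀ s : ℝ, Summable (fun i => p i ^ s * q i ^ (1 - s)))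
    (hpq : Summable (fun i => p i * Real.log (p i / q i)))
    (hqp : Summable (fun i => q i * Real.log (q i / p i)))
    (a b : ℝ) :
    |symS p q a - symS p q b| ≤
      Real.sqrt (symS p q (a + b - 1 / 2) * symS p q (a - b + 1 / 2)) :=
  theorem8_first_general p q hp hq hp1 hq1 hmom hpq hqp a b
end

section
/- (Theorem 9, upper bound) If p ≠ q, the Kullback–Leibler divergence satisfies K(p‖q) ≤ log(1 + χ²(p,q)) − (32/9) · (B·√(1 + χ²(p,q)) − 1)² / χ²(p,q), where B = B(p,q) is the Bhattacharya coefficient and χ²(p,q) is the χ²-distance of p from q. -/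
/-!
Put `s = 1 + χ²` and `z = √(s q / p)`. Under `p`, `z` has mean `B √s`, second moment `s`,
`E z⁻² = 1`, and `E (2 log z) = log s - K(p‖q)`. For each `w > 0`, `2 w (w² + 2w + 3) log x`
dominates `4 (w + 1)² (x - 1) - (w + 2) (x² - 1) + w³ (1 - x⁻²)` on `x > 0`, with contact of
order two at `x = 1` and `x = w`. Taking expectations gives, with `D = B √s - 1` and
`c = χ² = s - 1`, a lower bound for `log s - K` in terms of `D` and `c`. Since `0 < 2D < c`, one
can choose `w` optimally, i.e. with `D / c = (w² + w + 1) / (2 (w + 1) (w² + 1))`; the bound then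
becomes `c / (w² + 1) ≥ 32 D² / (9 c)`.
-/

open Real Set

theorem le_of_hasDerivAt_of_sub_mul_nonneg {f f' : ℝ → ℝ} {a x : ℝ}
    (hf : ∀ y ∈ uIcc a x, HasDerivAt f (f' y) y)
    (hf' : ∀ y ∈ uIcc a x, 0 ≤ (y - a) * f' y) : f a ≤ f x := by
  have hcont : ContinuousOn f (uIcc a x) := fun y hy =>
    (hf y hy).continuousAt.continuousWithinAt
  rcases le_total a x with hax | hxa
  · rw [uIcc_of_le hax] at hf hf' hcont
    refine monotoneOn_of_hasDerivWithinAt_nonneg (convex_Icc a x) hcont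
      (fun y hy => (hf y (interior_subset hy)).hasDerivWithinAt) (fun y hy => ?_)
      (left_mem_Icc.2 hax) (right_mem_Icc.2 hax) hax
    rw [interior_Icc] at hy
    exact nonneg_of_mul_nonneg_right (hf' y (Ioo_subset_Icc_self hy)) (sub_pos.2 hy.1)
  · rw [uIcc_of_ge hxa] at hf hf' hcont
    refine antitoneOn_of_hasDerivWithinAt_nonpos (convex_Icc x a) hcont
      (fun y hy => (hf y (interior_subset hy)).hasDerivWithinAt) (fun y hy => ?_)
      (left_mem_Icc.2 hxa) (right_mem_Icc.2 hxa) hxa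
    rw [interior_Icc] at hy
    exact nonpos_of_mul_nonneg_right (hf' y (Ioo_subset_Icc_self hy)) (sub_neg.2 hy.2)

theorem rational_le_mul_log {w x : ℝ} (hw : 0 < w) (hx : 0 < x) :
    4 * (w + 1) ^ 2 * (x - 1) - (w + 2) * (x ^ 2 - 1) + w ^ 3 * (1 - (x ^ 2)⁻¹)
      ≤ 2 * w * (w ^ 2 + 2 * w + 3) * log x := by
  set F : ℝ → ℝ := fun t => 2 * w * (w ^ 2 + 2 * w + 3) * log t
      - (4 * (w + 1) ^ 2 * (t - 1) - (w + 2) * (t ^ 2 - 1) + w ^ 3 * (1 - (t ^ 2)⁻¹))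
  -- The coefficients make `w` a double root of `F'`, so `F'` changes sign only at `1`.
  have hF' : ∀ y, 0 < y →
      HasDerivAt F (2 * (y - 1) * (y - w) ^ 2 * ((w + 2) * y + w) / y ^ 3) y := by
    intro y hy
    have hsq : HasDerivAt (fun t : ℝ => t ^ 2) (2 * y) y := by
      simpa using hasDerivAt_pow 2 y
    have h := ((hasDerivAt_log hy.ne').const_mul (2 * w * (w ^ 2 + 2 * w + 3))).sub
      (((((hasDerivAt_id y).sub_const 1).const_mul (4 * (w + 1) ^ 2)).sub
        ((hsq.sub_const 1).const_mul (w + 2))).add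
        (((hasDerivAt_const y 1).sub (hsq.inv (pow_ne_zero 2 hy.ne'))).const_mul (w ^ 3)))
    refine h.congr_deriv ?_
    field_simp
    ring
  have hpos : ∀ y ∈ uIcc 1 x, 0 < y := fun y hy => (lt_min one_pos hx).trans_le hy.1
  have hmono := le_of_hasDerivAt_of_sub_mul_nonneg (fun y hy => hF' y (hpos y hy)) fun y hy => by
    have hy := hpos y hy
    rw [show (y - 1) * (2 * (y - 1) * (y - w) ^ 2 * ((w + 2) * y + w) / y ^ 3)
      = 2 * ((y - 1) * (y - w)) ^ 2 * ((w + 2) * y + w) / y ^ 3 by ring]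
    positivity
  simp only [F, log_one, sub_self, one_pow, inv_one, mul_zero, zero_add] at hmono
  linarith

theorem hasSum_of_tsum_eq_of_ne_zero {ι α : Type*} [AddCommMonoid α] [TopologicalSpace α]
    {f : ι → α} {a : α} (h : ∑' i, f i = a) (ha : a ≠ 0) : HasSum f a := by
  have hf : Summable f := by
    by_contra hf
    exact ha (h ▸ tsum_eq_zero_of_not_summable hf)
  exact h ▸ hf.hasSum

/-- The ratio `D / c` for which `w` maximises `(4 (w + 1)² D - (w + 2) c) / (w (w² + 2w + 3))`,
the lower bound that `rational_le_mul_log` yields. -/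
noncomputable def optimalRatio (w : ℝ) : ℝ := (w ^ 2 + w + 1) / (2 * (w + 1) * (w ^ 2 + 1))

theorem exists_optimalRatio_eq {t : ℝ} (ht₀ : 0 < t) (ht₁ : t < 1 / 2) :
    ∃ w, 0 < w ∧ optimalRatio w = t := by
  have hlo : 0 < 1 - 2 * t := by linarith
  have hle : 1 - 2 * t ≤ t⁻¹ := by
    have : 2 < t⁻¹ := by rw [lt_inv_comm₀ two_pos ht₀]; linarith
    linarith
  have hcont : ContinuousOn optimalRatio (Icc (1 - 2 * t) t⁻¹) := by
    refine ContinuousOn.div (by fun_prop) (by fun_prop) fun u hu => ?_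
    have : 0 < u := hlo.trans_le hu.1
    positivity
  have hhi : optimalRatio t⁻¹ ≤ t := by
    rw [optimalRatio, div_le_iff₀ (by positivity)]
    field_simp
    nlinarith [sq_nonneg t, pow_pos ht₀ 3]
  have hlo' : t ≤ optimalRatio (1 - 2 * t) := by
    rw [optimalRatio, le_div_iff₀ (by positivity)]
    nlinarith [pow_pos hlo 4, pow_pos hlo 2]
  obtain ⟨w, hw, hwt⟩ := intermediate_value_Icc' hle hcont ⟨hhi, hlo'⟩
  exact ⟨w, hlo.trans_le hw.1, hwt⟩

theorem four_mul_sq_mul_optimalRatio_sub (w : ℝ) :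
    4 * (w + 1) ^ 2 * optimalRatio w - (w + 2) = w * (w ^ 2 + 2 * w + 3) / (w ^ 2 + 1) := by
  rw [optimalRatio]
  field_simp
  ring

theorem sq_optimalRatio_le {w : ℝ} (hw : 0 ≤ w) :
    32 / 9 * optimalRatio w ^ 2 ≤ 1 / (w ^ 2 + 1) := by
  rw [optimalRatio, div_pow, ← mul_div_assoc, div_le_div_iff₀ (by positivity) (by positivity)]
  nlinarith [mul_nonneg (mul_nonneg (sq_nonneg (w - 1)) hw) (sq_nonneg (w + 1)),
    mul_nonneg (sq_nonneg (w - 1)) (sq_nonneg (w + 1)), sq_nonneg (w ^ 2 - 1)]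

section Moments

variable {ι : Type*} {p z : ι → ℝ} {m₁ m₂ L : ℝ}

theorem one_lt_of_hasSum_moments (hp : ∀ i, 0 < p i) (hz : ∀ i, 0 < z i) (hz₁ : ∃ i, z i ≠ 1)
    (h₀ : HasSum p 1) (h₁ : HasSum (fun i => p i * z i) m₁)
    (hinv : HasSum (fun i => p i * (z i ^ 2)⁻¹) 1) : 1 < m₁ := by
  obtain ⟨j, hj⟩ := hz₁
  have hsum : HasSum (fun i => p i * ((z i - 1) ^ 2 * (2 * z i + 1) / (2 * z i ^ 2)))
      (m₁ + 1 / 2 - 3 / 2 * 1) := by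
    refine ((h₁.add (hinv.div_const 2)).sub (h₀.mul_left (3 / 2))).congr_fun fun i => ?_
    have := (hz i).ne'
    field_simp
    ring
  have hj' : z j - 1 ≠ 0 := sub_ne_zero.2 hj
  have : 0 < m₁ + 1 / 2 - 3 / 2 * 1 := by
    refine hasSum_lt (i := j) (fun i => ?_) ?_ hasSum_zero hsum
    · have := hz i; have := hp i; positivity
    · have := hz j; have := hp j; positivity
  linarith

theorem two_mul_sub_one_lt_of_hasSum_moments (hp : ∀ i, 0 < p i) (hz₁ : ∃ i, z i ≠ 1)
    (h₀ : HasSum p 1) (h₁ : HasSum (fun i => p i * z i) m₁)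
    (h₂ : HasSum (fun i => p i * z i ^ 2) m₂) : 2 * (m₁ - 1) < m₂ - 1 := by
  obtain ⟨j, hj⟩ := hz₁
  have hsum : HasSum (fun i => p i * (z i - 1) ^ 2) (m₂ - 2 * m₁ + 1) :=
    ((h₂.sub (h₁.mul_left 2)).add h₀).congr_fun fun i => by ring
  have hj' : z j - 1 ≠ 0 := sub_ne_zero.2 hj
  have : 0 < m₂ - 2 * m₁ + 1 := by
    refine hasSum_lt (i := j) (fun i => ?_) ?_ hasSum_zero hsum
    · have := hp i; positivity
    · have := hp j; positivity
  linarith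

theorem rational_moments_le_mul_log_moment (hp : ∀ i, 0 ≤ p i) (hz : ∀ i, 0 < z i)
    (h₀ : HasSum p 1) (h₁ : HasSum (fun i => p i * z i) m₁)
    (h₂ : HasSum (fun i => p i * z i ^ 2) m₂) (hinv : HasSum (fun i => p i * (z i ^ 2)⁻¹) 1)
    (hlog : HasSum (fun i => p i * log (z i)) L) {w : ℝ} (hw : 0 < w) :
    4 * (w + 1) ^ 2 * (m₁ - 1) - (w + 2) * (m₂ - 1) ≤ 2 * w * (w ^ 2 + 2 * w + 3) * L := by
  have hlhs : HasSum (fun i => p i * (4 * (w + 1) ^ 2 * (z i - 1) - (w + 2) * (z i ^ 2 - 1)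
      + w ^ 3 * (1 - (z i ^ 2)⁻¹)))
      (4 * (w + 1) ^ 2 * (m₁ - 1) - (w + 2) * (m₂ - 1) + w ^ 3 * (1 - 1)) :=
    ((((h₁.sub h₀).mul_left _).sub ((h₂.sub h₀).mul_left _)).add
      ((h₀.sub hinv).mul_left _)).congr_fun fun i => by ring
  rw [sub_self, mul_zero, add_zero] at hlhs
  refine hasSum_le (fun i => ?_) hlhs (hlog.mul_left (2 * w * (w ^ 2 + 2 * w + 3)))
  rw [mul_left_comm]
  exact mul_le_mul_of_nonneg_left (rational_le_mul_log hw (hz i)) (hp i)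

theorem sq_div_le_two_mul_of_hasSum_moments (hp : ∀ i, 0 < p i) (hz : ∀ i, 0 < z i)
    (hz₁ : ∃ i, z i ≠ 1) (h₀ : HasSum p 1) (h₁ : HasSum (fun i => p i * z i) m₁)
    (h₂ : HasSum (fun i => p i * z i ^ 2) m₂) (hinv : HasSum (fun i => p i * (z i ^ 2)⁻¹) 1)
    (hlog : HasSum (fun i => p i * log (z i)) L) :
    32 / 9 * (m₁ - 1) ^ 2 / (m₂ - 1) ≤ 2 * L := by
  have hD := one_lt_of_hasSum_moments hp hz hz₁ h₀ h₁ hinv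
  have hc := two_mul_sub_one_lt_of_hasSum_moments hp hz₁ h₀ h₁ h₂
  have hc₀ : 0 < m₂ - 1 := by linarith
  obtain ⟨w, hw, hwD⟩ := exists_optimalRatio_eq (t := (m₁ - 1) / (m₂ - 1))
    (div_pos (by linarith) hc₀) (by rw [div_lt_iff₀ hc₀]; linarith)
  have hm₁ : m₁ - 1 = optimalRatio w * (m₂ - 1) := by rw [hwD]; field_simp
  have hbound := rational_moments_le_mul_log_moment (fun i => (hp i).le) hz h₀ h₁ h₂ hinv hlog hw
  rw [hm₁, ← mul_assoc, ← sub_mul, four_mul_sq_mul_optimalRatio_sub] at hbound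
  calc 32 / 9 * (m₁ - 1) ^ 2 / (m₂ - 1)
      = 32 / 9 * optimalRatio w ^ 2 * (m₂ - 1) := by rw [hm₁]; field_simp
    _ ≤ 1 / (w ^ 2 + 1) * (m₂ - 1) := by gcongr; exact sq_optimalRatio_le hw.le
    _ ≤ 2 * L := le_of_mul_le_mul_left (by linear_combination hbound)
      (by positivity : 0 < w * (w ^ 2 + 2 * w + 3))

end Moments

section Divergences

variable {ι : Type*} {p q : ι → ℝ} {s B K : ℝ}

theorem hasSum_sq_sub_div (hq : ∀ i, 0 < q i) (hP : HasSum p 1) (hQ : HasSum q 1)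
    (hχ : HasSum (fun i => p i ^ 2 / q i) s) :
    HasSum (fun i => (p i - q i) ^ 2 / q i) (s - 1) := by
  rw [show s - 1 = s - 2 * 1 + 1 by ring]
  refine ((hχ.sub (hP.mul_left 2)).add hQ).congr_fun fun i => ?_
  field_simp [(hq i).ne']
  ring

theorem kl_le_of_hasSum (hp : ∀ i, 0 < p i) (hq : ∀ i, 0 < q i) (hne : p ≠ q)
    (hP : HasSum p 1) (hQ : HasSum q 1) (hχ : HasSum (fun i => p i ^ 2 / q i) s)
    (hB : HasSum (fun i => √(p i * q i)) B) (hK : HasSum (fun i => p i * log (p i / q i)) K) :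
    K ≤ log s - 32 / 9 * (B * √s - 1) ^ 2 / (s - 1) := by
  have hs : 0 < s := by
    obtain ⟨j, -⟩ := Function.ne_iff.1 hne
    refine hasSum_lt (i := j) (fun i => ?_) ?_ hasSum_zero hχ
    · have := hq i; positivity
    · have := hp j; have := hq j; positivity
  set z : ι → ℝ := fun i => √s * √(q i) / √(p i)
  have hz : ∀ i, 0 < z i := fun i => by have := hp i; have := hq i; positivity
  have hz_sq : ∀ i, z i ^ 2 = s * q i / p i := fun i => by
    simp only [z, div_pow, mul_pow, sq_sqrt hs.le, sq_sqrt (hp i).le, sq_sqrt (hq i).le]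
  have hz₂ : ∀ i, p i * z i ^ 2 = s * q i := fun i => by
    rw [hz_sq, mul_div_cancel₀ _ (hp i).ne']
  have hz₁ : ∃ i, z i ≠ 1 := by
    by_contra! h
    have hps : p = fun i => s * q i := funext fun i => by simpa [h i] using hz₂ i
    have : s = 1 := by simpa [hps] using (hQ.mul_left s).unique (hps ▸ hP)
    exact hne (by simpa [this] using hps)
  have h₁ : HasSum (fun i => p i * z i) (B * √s) :=
    (hB.mul_right √s).congr_fun fun i => by
      simp only [z, sqrt_mul (hp i).le]
      field_simp [(sqrt_pos.2 (hp i)).ne']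
      rw [sq_sqrt (hp i).le]
      ring
  have h₂ : HasSum (fun i => p i * z i ^ 2) s := by
    simpa [hz₂] using hQ.mul_left s
  have hinv : HasSum (fun i => p i * (z i ^ 2)⁻¹) 1 := by
    rw [← div_self hs.ne']
    refine (hχ.div_const s).congr_fun fun i => ?_
    rw [hz_sq]
    have := (hp i).ne'; have := (hq i).ne'
    field_simp
  have hlog : HasSum (fun i => p i * log (z i)) ((1 * log s - K) / 2) := by
    refine ((hP.mul_right (log s)).sub hK).div_const 2 |>.congr_fun fun i => ?_
    have := hp i; have := hq i
    simp only [z]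
    rw [log_div (by positivity) (by positivity), log_mul (by positivity) (by positivity),
      log_div (by positivity) (by positivity), log_sqrt hs.le, log_sqrt this.le, log_sqrt (hp i).le]
    ring
  have := sq_div_le_two_mul_of_hasSum_moments hp hz hz₁ hP h₁ h₂ hinv hlog
  linarith

end Divergences

theorem theorem9_upper_general {ι : Type*} (p q : ι → ℝ)
    (hp : ∀ i, 0 < p i) (hq : ∀ i, 0 < q i)
    (hp1 : ∑' i, p i = 1) (hq1 : ∑' i, q i = 1) (hne : p ≠ q)
    (hKL : Summable (fun i => p i * Real.log (p i / q i)))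
    (hchi : Summable (fun i => (p i) ^ 2 / q i))
    (hB : Summable (fun i => Real.sqrt (p i * q i))) :
    ∑' i, p i * Real.log (p i / q i) ≤
      Real.log (1 + ∑' i, (p i - q i) ^ 2 / q i) -
        32 / 9 *
          ((∑' i, Real.sqrt (p i * q i)) * Real.sqrt (1 + ∑' i, (p i - q i) ^ 2 / q i) - 1) ^ 2 /
          (∑' i, (p i - q i) ^ 2 / q i) := by
  have hP := hasSum_of_tsum_eq_of_ne_zero hp1 one_ne_zero
  have hQ := hasSum_of_tsum_eq_of_ne_zero hq1 one_ne_zero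
  rw [(hasSum_sq_sub_div hq hP hQ hchi.hasSum).tsum_eq, add_sub_cancel]
  exact kl_le_of_hasSum hp hq hne hP hQ hchi.hasSum hB.hasSum hKL.hasSum

theorem theorem9_upper {ι : Type*} [Countable ι] (p q : ι → ℝ)
    (hp : ∀ i, 0 < p i) (hq : ∀ i, 0 < q i)
    (hp1 : ∑' i, p i = 1) (hq1 : ∑' i, q i = 1) (hne : p ≠ q)
    (hKL : Summable (fun i => p i * Real.log (p i / q i)))
    (hchi : Summable (fun i => (p i) ^ 2 / q i))
    (hB : Summable (fun i => Real.sqrt (p i * q i))) :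
    ∑' i, p i * Real.log (p i / q i) ≤
      Real.log (1 + ∑' i, (p i - q i) ^ 2 / q i) -
        32 / 9 *
          ((∑' i, Real.sqrt (p i * q i)) * Real.sqrt (1 + ∑' i, (p i - q i) ^ 2 / q i) - 1) ^ 2 /
          (∑' i, (p i - q i) ^ 2 / q i) :=
  theorem9_upper_general p q hp hq hp1 hq1 hne hKL hchi hB
end
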